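/- arXiv:0704.0382 — 5 statements merged into one kernel-verified Lean document; each statement's English description precedes it below -/
import Mathlib

section
/- The intersection of two cells of S is again a cell of S. That is, if M₁ and M₂ are cells of S, then for every z ∉ M₁ ∩ M₂ one has z·S ⊄ (M₁ ∩ M₂)·S. -/
open scoped Pointwise

/-- `X` is a cell of `S`: a finite subset such that for all `z ∉ X`, `z·S ⊄ X·S`. -/
def IsCell {G : Type*} [Group G] (S X : Set G) : Prop :=
  X.Finite ∧ ∀ z ∉ X, ¬ {z} * S ⊆ X * S

theorem IsCell.not_singleton_mul_subset_mul_of_subset {G : Type*} [Group G] {S M X : Set G}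
    (hM : IsCell S M) (hXM : X ⊆ M) {z : G} (hz : z ∉ M) : ¬ {z} * S ⊆ X * S :=
  fun hsub => hM.2 z hz (hsub.trans (Set.mul_subset_mul_right hXM))

theorem inter_cell_general {G : Type*} [Group G] (S : Set G)
    (M₁ M₂ : Set G) (h₁ : IsCell S M₁) (h₂ : IsCell S M₂) :
    IsCell S (M₁ ∩ M₂) := by
  refine ⟨h₁.1.inter_of_left M₂, fun z hz => ?_⟩
  rcases not_and_or.mp hz with hz₁ | hz₂
  · exact h₁.not_singleton_mul_subset_mul_of_subset Set.inter_subset_left hz₁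
  · exact h₂.not_singleton_mul_subset_mul_of_subset Set.inter_subset_right hz₂

/-- The intersection of two cells of `S` is again a cell of `S`. -/
theorem inter_cell {G : Type*} [Group G] (S : Set G) (hS : S.Finite) (hone : (1 : G) ∈ S)
    (M₁ M₂ : Set G) (h₁ : IsCell S M₁) (h₂ : IsCell S M₂) :
    IsCell S (M₁ ∩ M₂) :=
  inter_cell_general S M₁ M₂ h₁ h₂
end

section
/- Every finite subset T of a group G containing 1 with 1 ∈ S is contained in a cell X of S satisfying X·S = T·S and |X·S| − |X| ≤ |T·S| − |T|. -/
/-!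
Adjoining to `T` every `z` with `z·S ⊆ T·S`, all at once, gives a set `X ⊇ T` with `X·S = T·S`.
It is a cell because any `z` with `z·S ⊆ X·S = T·S` was already adjoined, it is finite because
`1 ∈ S` puts it inside `T·S`, and `|X·S| - |X| ≤ |T·S| - |T|` because `|T| ≤ |X|`.
-/

open scoped Pointwise

/-- `X` is a `u`-cell of `S`: a cell with `|X·S| - |X| = u`. -/
def IsUCell {G : Type*} [Group G] (S : Set G) (u : ℕ) (X : Set G) : Prop :=
  IsCell S X ∧ (X * S).ncard = X.ncard + u

/-- `X` is a `u`-kernel of `S`: a `u`-cell of minimal cardinality. -/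
def IsUKernel {G : Type*} [Group G] (S : Set G) (u : ℕ) (X : Set G) : Prop :=
  IsUCell S u X ∧ ∀ Y : Set G, IsUCell S u Y → X.ncard ≤ Y.ncard

section CellClosure

variable {α : Type*}

def cellClosure [Mul α] (S T : Set α) : Set α :=
  {z | {z} * S ⊆ T * S}

theorem subset_cellClosure [Mul α] (S T : Set α) : T ⊆ cellClosure S T :=
  fun _ ht => Set.mul_subset_mul_right (Set.singleton_subset_iff.mpr ht)

theorem cellClosure_mul [Mul α] (S T : Set α) : cellClosure S T * S = T * S := by
  refine (Set.mul_subset_mul_right (subset_cellClosure S T)).antisymm' ?_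
  rintro _ ⟨z, hz, s, hs, rfl⟩
  exact hz (Set.mul_mem_mul rfl hs)

theorem cellClosure_subset_mul [MulOneClass α] {S : Set α} (hone : (1 : α) ∈ S) (T : Set α) :
    cellClosure S T ⊆ T * S :=
  fun z hz => hz ⟨z, rfl, 1, hone, mul_one z⟩

theorem isCell_cellClosure {G : Type*} [Group G] {S T : Set G} (hS : S.Finite) (hT : T.Finite)
    (hone : (1 : G) ∈ S) : IsCell S (cellClosure S T) := by
  refine ⟨(hT.mul hS).subset (cellClosure_subset_mul hone T), fun z hz hzS => hz ?_⟩
  rwa [cellClosure_mul] at hzS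

end CellClosure

theorem exists_cell_containing_general {G : Type*} [Group G] (S : Set G) (hS : S.Finite)
    (hone : (1 : G) ∈ S) (T : Set G) (hT : T.Finite) :
    ∃ X : Set G, IsCell S X ∧ T ⊆ X ∧ X * S = T * S ∧
      ((X * S).ncard : ℤ) - X.ncard ≤ ((T * S).ncard : ℤ) - T.ncard := by
  have hcell := isCell_cellClosure hS hT hone
  have hcard : T.ncard ≤ (cellClosure S T).ncard :=
    Set.ncard_le_ncard (subset_cellClosure S T) hcell.1
  refine ⟨cellClosure S T, hcell, subset_cellClosure S T, cellClosure_mul S T, ?_⟩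
  rw [cellClosure_mul]
  omega

/-- Every finite subset containing `1` extends to a cell with the same sumset. -/
theorem exists_cell_containing {G : Type*} [Group G] (S : Set G) (hS : S.Finite)
    (hone : (1 : G) ∈ S) (T : Set G) (hT : T.Finite) (h1T : (1 : G) ∈ T) :
    ∃ X : Set G, IsCell S X ∧ T ⊆ X ∧ X * S = T * S ∧
      ((X * S).ncard : ℤ) - X.ncard ≤ ((T * S).ncard : ℤ) - T.ncard :=
  exists_cell_containing_general S hS hone T hT
end

section
/- Let G be a group, S a finite subset with 1 ∈ S, and M, N finite subgroups of G with N ⊆ M. If |M·S| − |M| ≤ |S| − 1, then |M·S| − |M| ≤ |N·S| − |N|. -/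
/-!
Every set of the form `N * T` is a union of right cosets of `N`, so its cardinality is a multiple
of `|N|`. Since `N * M = M`, both `|M * S|` and `|M|` are such cardinalities, as are `|N * S|` and
`|N|`; hence `|M * S| - |M| ≡ |N * S| - |N| (mod |N|)`. The hypothesis together with
`|S| ≤ |N * S|` gives `|M * S| - |M| < (|N * S| - |N|) + |N|`, and a congruence modulo `|N|`
turns this into `≤ |N * S| - |N|`.
-/

open scoped Pointwise

theorem Subgroup.ncard_dvd_ncard_mul {G : Type*} [Group G] (H : Subgroup G) (t : Set G) :
    (H : Set G).ncard ∣ ((H : Set G) * t).ncard := by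
  rw [← Set.ncard_inv ((H : Set G) * t), mul_inv_rev, inv_coe_set,
    ← Nat.card_coe_set_eq, ← Nat.card_coe_set_eq, card_mul_eq_card_subgroup_mul_card_quotient]
  exact dvd_mul_right _ _

theorem Subgroup.ncard_le_ncard_mul {G : Type*} [Group G] {H : Subgroup G}
    (hH : (H : Set G).Finite) (t : Set G) : t.ncard ≤ ((H : Set G) * t).ncard := by
  have hsub : t ⊆ (H : Set G) * t := fun x hx => ⟨1, H.one_mem, x, hx, one_mul x⟩
  by_cases ht : t.Finite
  · exact Set.ncard_le_ncard hsub (hH.mul ht)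
  · simp [Set.Infinite.ncard ht]

theorem Subgroup.coe_mul_coe_of_le {G : Type*} [Group G] {N M : Subgroup G} (hNM : N ≤ M) :
    (N : Set G) * M = M := by
  refine (Set.mul_subset_mul_right ?_).trans_eq (coe_mul_coe M) |>.antisymm ?_
  · exact hNM
  · exact fun x hx => ⟨1, N.one_mem, x, hx, one_mul x⟩

theorem Int.le_of_dvd_of_dvd_of_lt_add {a b d : ℤ} (ha : d ∣ a) (hb : d ∣ b) (h : a < b + d) :
    a ≤ b := by
  by_contra! hba
  have := Int.le_of_dvd (by omega) (dvd_sub ha hb)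
  omega

theorem divisibility_step_general {G : Type*} [Group G] (S : Set G) (M N : Subgroup G)
    (hNfin : (N : Set G).Finite) (hNM : N ≤ M)
    (h : (((M : Set G) * S).ncard : ℤ) - (M : Set G).ncard ≤ (S.ncard : ℤ) - 1) :
    (((M : Set G) * S).ncard : ℤ) - (M : Set G).ncard ≤
      (((N : Set G) * S).ncard : ℤ) - (N : Set G).ncard := by
  have hNM' := Subgroup.coe_mul_coe_of_le hNM
  have hdvd_MS : (N : Set G).ncard ∣ ((M : Set G) * S).ncard := by
    simpa only [← mul_assoc, hNM'] using N.ncard_dvd_ncard_mul ((M : Set G) * S)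
  have hdvd_M : (N : Set G).ncard ∣ (M : Set G).ncard := by
    simpa only [hNM'] using N.ncard_dvd_ncard_mul M
  have hS_le : S.ncard ≤ ((N : Set G) * S).ncard := Subgroup.ncard_le_ncard_mul hNfin S
  refine Int.le_of_dvd_of_dvd_of_lt_add
    (dvd_sub (Int.natCast_dvd_natCast.2 hdvd_MS) (Int.natCast_dvd_natCast.2 hdvd_M))
    (dvd_sub (Int.natCast_dvd_natCast.2 (N.ncard_dvd_ncard_mul S)) dvd_rfl) ?_
  omega

/-- Divisibility step: for nested finite subgroups `N ⊆ M`,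
if `|M·S| - |M| ≤ |S| - 1` then `|M·S| - |M| ≤ |N·S| - |N|`. -/
theorem divisibility_step {G : Type*} [Group G] (S : Set G) (hS : S.Finite)
    (hone : (1 : G) ∈ S) (M N : Subgroup G)
    (hMfin : (M : Set G).Finite) (hNfin : (N : Set G).Finite) (hNM : N ≤ M)
    (h : (((M : Set G) * S).ncard : ℤ) - (M : Set G).ncard ≤ (S.ncard : ℤ) - 1) :
    (((M : Set G) * S).ncard : ℤ) - (M : Set G).ncard ≤
      (((N : Set G) * S).ncard : ℤ) - (N : Set G).ncard :=
  divisibility_step_general S M N hNfin hNM h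
end

section
/- Let G be a group, S a finite subset with 1 ∈ S, H a finite subgroup of G, and T a finite subset with H·T·S = T·S. Then |T·S| ≤ |H·S| + |H·T| − |H|. -/
/-!
`T·S` and `H·S`, `H·T` are unions of `H`-cosets, so `|H|` divides `|H·S| + |H·T| - |T·S|`.
Since `S ⊆ H·S` and `T ⊆ H·T`, the smallness hypothesis makes this quantity positive, hence at
least `|H|`.
-/

open scoped Pointwise

theorem Subgroup.ncard_dvd_ncard_of_mul_eq {G : Type*} [Group G] (H : Subgroup G) {A : Set G}
    (hA : A * H = A) : (H : Set G).ncard ∣ A.ncard := by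
  rw [← hA, ← Nat.card_coe_set_eq, ← Nat.card_coe_set_eq,
    H.card_mul_eq_card_subgroup_mul_card_quotient]
  exact dvd_mul_right _ _

theorem Subgroup.ncard_dvd_ncard_subgroup_mul {G : Type*} [CommGroup G] (H : Subgroup G)
    (A : Set G) : (H : Set G).ncard ∣ ((H : Set G) * A).ncard :=
  H.ncard_dvd_ncard_of_mul_eq <| by rw [mul_comm, ← mul_assoc, coe_mul_coe H]

theorem Subgroup.ncard_le_ncard_subgroup_mul {G : Type*} [Group G] (H : Subgroup G)
    (hH : (H : Set G).Finite) {A : Set G} (hA : A.Finite) : A.ncard ≤ ((H : Set G) * A).ncard :=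
  Set.ncard_le_ncard (Set.subset_mul_right A H.one_mem) (hH.mul hA)

theorem card_bound_of_stab_general {G : Type*} [CommGroup G] (S T : Set G)
    (hS : S.Finite) (hT : T.Finite)
    (H : Subgroup G) (hHfin : (H : Set G).Finite)
    (hstab : (H : Set G) * T * S = T * S)
    (hsmall : ((T * S).ncard : ℤ) ≤ (T.ncard : ℤ) + S.ncard - 2) :
    ((T * S).ncard : ℤ) ≤
      (((H : Set G) * S).ncard : ℤ) + ((H : Set G) * T).ncard - (H : Set G).ncard := by
  have hdvd : ((H : Set G).ncard : ℤ) ∣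
      ((H : Set G) * S).ncard + ((H : Set G) * T).ncard - (T * S).ncard := by
    have hTS := H.ncard_dvd_ncard_subgroup_mul (T * S)
    rw [← mul_assoc, hstab] at hTS
    exact dvd_sub (dvd_add (Int.natCast_dvd_natCast.mpr (H.ncard_dvd_ncard_subgroup_mul S))
      (Int.natCast_dvd_natCast.mpr (H.ncard_dvd_ncard_subgroup_mul T)))
      (Int.natCast_dvd_natCast.mpr hTS)
  have hS_le := H.ncard_le_ncard_subgroup_mul hHfin hS
  have hT_le := H.ncard_le_ncard_subgroup_mul hHfin hT
  have hle := Int.le_of_dvd (by omega) hdvd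
  omega

/-- If `H·T·S = T·S` then `|T·S| ≤ |H·S| + |H·T| - |H|`. -/
theorem card_bound_of_stab {G : Type*} [CommGroup G] (S T : Set G)
    (hS : S.Finite) (hT : T.Finite) (hone : (1 : G) ∈ S) (h1T : (1 : G) ∈ T)
    (H : Subgroup G) (hHfin : (H : Set G).Finite)
    (hstab : (H : Set G) * T * S = T * S)
    (hsmall : ((T * S).ncard : ℤ) ≤ (T.ncard : ℤ) + S.ncard - 2) :
    ((T * S).ncard : ℤ) ≤
      (((H : Set G) * S).ncard : ℤ) + ((H : Set G) * T).ncard - (H : Set G).ncard :=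
  card_bound_of_stab_general S T hS hT H hHfin hstab hsmall
end

section
/- Let G be an abelian group and S a finite subset with 1 ∈ S. If H is a finite subgroup with (H ∪ {y})·S = H·S for some y ∈ G, then y ∈ Stab(H·S), and hence if H = Stab(X·S) for some set X with H·X·S = X·S, then y ∈ H. -/
/-!
Since `y·S ⊆ H·S` and `H·H = H`, commutativity gives `y·(H·S) ⊆ H·(H·S) = H·S`; a translate
of the finite set `H·S` has the same size, so the inclusion is an equality. Then `y` also fixes
`X·S = H·X·S = (H·S)·X`, i.e. lies in the stabilizer `H` of `X·S`.
-/

open scoped Pointwise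

namespace Set

theorem singleton_mul_eq_of_subset {G : Type*} [Mul G] [IsLeftCancelMul G] {A : Set G}
    (hA : A.Finite) {y : G} (h : {y} * A ⊆ A) : {y} * A = A :=
  eq_of_subset_of_ncard_le h
    (by rw [singleton_mul, ncard_image_of_injective _ (mul_right_injective y)]) hA

theorem singleton_mul_submonoid_mul_subset {M : Type*} [CommMonoid M] (H : Submonoid M)
    {S : Set M} {y : M} (h : {y} * S ⊆ H * S) : {y} * (H * S) ⊆ H * S :=
  calc {y} * (H * S) = H * ({y} * S) := mul_left_comm _ _ _
    _ ⊆ H * (H * S) := mul_subset_mul_left h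
    _ = H * S := by rw [← mul_assoc, H.coe_mul_self_eq]

end Set

open Set in
theorem stabilizer_nonextendible_general {G : Type*} [CommGroup G] (S : Set G) (hS : S.Finite)
    (H : Subgroup G) (hHfin : (H : Set G).Finite) (y : G)
    (hy : ((H : Set G) ∪ {y}) * S = (H : Set G) * S) :
    {y} * ((H : Set G) * S) = (H : Set G) * S ∧
      ∀ X : Set G, (H : Set G) = {g : G | {g} * (X * S) = X * S} →
        (H : Set G) * X * S = X * S → y ∈ H := by
  have hyS : {y} * S ⊆ (H : Set G) * S := hy ▸ mul_subset_mul_right subset_union_right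
  have hstab : {y} * ((H : Set G) * S) = (H : Set G) * S :=
    singleton_mul_eq_of_subset (hHfin.mul hS) (singleton_mul_submonoid_mul_subset H.toSubmonoid hyS)
  refine ⟨hstab, fun X hX hHX => ?_⟩
  rw [← SetLike.mem_coe, hX, mem_ofPred_eq, ← hHX, mul_right_comm, ← mul_assoc, hstab]

/-- If `(H ∪ {y})·S = H·S` for a finite subgroup `H`, then `y` stabilizes `H·S`;
hence if `H` is the stabilizer of `X·S` (with `H·X·S = X·S`), then `y ∈ H`. -/
theorem stabilizer_nonextendible {G : Type*} [CommGroup G] (S : Set G) (hS : S.Finite)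
    (hone : (1 : G) ∈ S) (H : Subgroup G) (hHfin : (H : Set G).Finite) (y : G)
    (hy : ((H : Set G) ∪ {y}) * S = (H : Set G) * S) :
    {y} * ((H : Set G) * S) = (H : Set G) * S ∧
      ∀ X : Set G, (H : Set G) = {g : G | {g} * (X * S) = X * S} →
        (H : Set G) * X * S = X * S → y ∈ H :=
  stabilizer_nonextendible_general S hS H hHfin y hy
end
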